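/- arXiv:2605.21769 — 3 statements merged into one kernel-verified Lean document; each statement's English description precedes it below -/
import Mathlib

section
/- Let n ≥ 3 be an integer and λ > 0. Define φ_λ(x) = ∫_{S^{n-1}} e^{λ x·ω} dS(ω). Then there exists C = C(n,λ) > 0 such that φ_λ(x) ≤ C (1+|x|)^{-(n-1)/2} e^{λ|x|} for all x ∈ ℝⁿ. -/
open MeasureTheory Real Set
open scoped ENNReal

-- 1D lemma: integral of indicator (Iic B) exp(c t)
lemma aux_iic (c B : ℝ) (hc : 0 < c) :
    Integrable (Set.indicator (Iic B) (fun t => Real.exp (c*t))) ∧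
    ∫ t, Set.indicator (Iic B) (fun t => Real.exp (c*t)) t = c⁻¹ * Real.exp (c * B) := by
  have key : ∀ t : ℝ, Set.indicator (Iic (c*B)) Real.exp (c * t)
      = Set.indicator (Iic B) (fun t => Real.exp (c*t)) t := by
    intro t
    by_cases h : t ≤ B
    · rw [Set.indicator_of_mem (by simpa using (mul_le_mul_of_nonneg_left h hc.le)),
        Set.indicator_of_mem (by simpa using h)]
    · rw [Set.indicator_of_notMem (by simpa using ((mul_lt_mul_iff_right₀ hc).2 (not_le.1 h))),
        Set.indicator_of_notMem (by simpa using h)]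
  have hF : Integrable (Set.indicator (Iic (c*B)) Real.exp) := by
    rw [integrable_indicator_iff measurableSet_Iic]
    exact integrableOn_exp_Iic (c*B)
  have hF2 := hF.comp_mul_left' (ne_of_gt hc)
  constructor
  · exact hF2.congr (Filter.Eventually.of_forall key)
  · have := MeasureTheory.Measure.integral_comp_mul_left
      (Set.indicator (Iic (c*B)) Real.exp) c
    simp_rw [key] at this
    rw [this, integral_indicator measurableSet_Iic, integral_exp_Iic,
      abs_of_pos (inv_pos.2 hc), smul_eq_mul]

lemma aux_pi (n : ℕ) [NeZero n] (lam R : ℝ) (hlam : 0 < lam) (hR : 0 < R) :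
    ∫⁻ w : Fin n → ℝ, Set.indicator {w : Fin n → ℝ | ∑ i, w i ^ 2 ≤ R^2}
        (fun w => ENNReal.ofReal (Real.exp (lam * w 0))) w
      ≤ ENNReal.ofReal ((2/lam) * Real.exp (lam*R) * Real.sqrt (4*π*R/lam) ^ (n-1)) := by
  set g : Fin n → ℝ → ℝ := fun i t => if i = 0 then
      Real.exp (lam/2*R) * Set.indicator (Iic R) (fun t => Real.exp (lam/2*t)) t
    else Real.exp (-(lam/(4*R)) * t^2) with hg_def
  have hc2 : 0 < lam/2 := half_pos hlam
  have hc4 : 0 < lam/(4*R) := by positivity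
  have hg : ∀ i, Integrable (g i) := by
    intro i
    by_cases h : i = 0
    · simpa [hg_def, h] using ((aux_iic (lam/2) R hc2).1).const_mul (Real.exp (lam/2*R))
    · simpa [hg_def, h] using integrable_exp_neg_mul_sq hc4
  have hgnn : ∀ i t, 0 ≤ g i t := by
    intro i t
    by_cases h : i = 0
    · simp only [hg_def, h, if_pos]
      exact mul_nonneg (Real.exp_nonneg _)
        (Set.indicator_nonneg (fun t _ => (Real.exp_nonneg _)) t)
    · simp only [hg_def, if_neg h]
      exact Real.exp_nonneg _
  have hpt : ∀ w : Fin n → ℝ, Set.indicator {w : Fin n → ℝ | ∑ i, w i ^ 2 ≤ R^2}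
      (fun w => ENNReal.ofReal (Real.exp (lam * w 0))) w
      ≤ ENNReal.ofReal (∏ i, g i (w i)) := by
    intro w
    by_cases hw : w ∈ {w : Fin n → ℝ | ∑ i, w i ^ 2 ≤ R^2}
    · rw [Set.indicator_of_mem hw]
      apply ENNReal.ofReal_le_ofReal
      have hsum : ∑ i, w i ^ 2 ≤ R^2 := hw
      have h0 : w 0 ^ 2 + ∑ i ∈ Finset.univ.erase 0, w i ^ 2 = ∑ i, w i ^ 2 :=
        Finset.add_sum_erase Finset.univ (fun i : Fin n => w i ^ 2) (Finset.mem_univ 0)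
      have hS' : 0 ≤ ∑ i ∈ Finset.univ.erase 0, w i ^ 2 :=
        Finset.sum_nonneg fun i _ => sq_nonneg _
      set S' := ∑ i ∈ Finset.univ.erase 0, w i ^ 2
      have hw0 : w 0 ≤ R := by nlinarith [sq_nonneg (w 0 - R), sq_nonneg (w 0 + R)]
      have hprod : (∏ i, g i (w i)) = g 0 (w 0) * ∏ i ∈ Finset.univ.erase 0, g i (w i) :=
        (Finset.mul_prod_erase _ _ (Finset.mem_univ 0)).symm
      have herase : ∏ i ∈ Finset.univ.erase 0, g i (w i)
          = Real.exp (∑ i ∈ Finset.univ.erase 0, -(lam/(4*R)) * w i ^2) := by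
        rw [Real.exp_sum]
        apply Finset.prod_congr rfl
        intro i hi
        simp [hg_def, Finset.mem_erase.1 hi |>.1]
      have hkey : S' ≤ 2*R*(R - w 0) := by nlinarith [sq_nonneg (R - w 0)]
      have hg0 : g 0 (w 0) = Real.exp (lam/2*R) * Real.exp (lam/2 * w 0) := by
        simp [hg_def, Set.indicator_of_mem (by simpa using hw0 : w 0 ∈ Iic R)]
      rw [hprod, herase, hg0, ← Real.exp_add, ← Real.exp_add]
      rw [Real.exp_le_exp]
      have hsum_eq : ∑ i ∈ Finset.univ.erase 0, -(lam/(4*R)) * w i ^2 = -(lam/(4*R)) * S' := by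
        rw [← Finset.mul_sum]
      rw [hsum_eq]
      have : lam/(4*R) * S' ≤ lam/(4*R) * (2*R*(R - w 0)) :=
        mul_le_mul_of_nonneg_left hkey hc4.le
      have heq : lam/(4*R) * (2*R*(R - w 0)) = lam/2*(R - w 0) := by
        field_simp; ring
      nlinarith
    · rw [Set.indicator_of_notMem hw]
      exact bot_le
  calc ∫⁻ w : Fin n → ℝ, Set.indicator {w : Fin n → ℝ | ∑ i, w i ^ 2 ≤ R^2}
        (fun w => ENNReal.ofReal (Real.exp (lam * w 0))) w
      ≤ ∫⁻ w : Fin n → ℝ, ENNReal.ofReal (∏ i, g i (w i)) := lintegral_mono hpt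
    _ = ENNReal.ofReal (∫ w : Fin n → ℝ, ∏ i, g i (w i)) :=
        (ofReal_integral_eq_lintegral_ofReal (Integrable.fintype_prod hg)
          (Filter.Eventually.of_forall fun w => Finset.prod_nonneg fun i _ => hgnn i (w i))).symm
    _ ≤ ENNReal.ofReal ((2/lam) * Real.exp (lam*R) * Real.sqrt (4*π*R/lam) ^ (n-1)) := by
        apply ENNReal.ofReal_le_ofReal
        rw [MeasureTheory.integral_fintype_prod_volume_eq_prod g]
        have h1 : (∏ i, ∫ t, g i t) = (∫ t, g 0 t) * ∏ i ∈ Finset.univ.erase 0, ∫ t, g i t :=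
          (Finset.mul_prod_erase _ _ (Finset.mem_univ 0)).symm
      
        have hι0 : ∫ t, g 0 t = Real.exp (lam/2*R) * ((lam/2)⁻¹ * Real.exp (lam/2 * R)) := by
          simp only [hg_def, if_pos rfl]
          rw [integral_const_mul, (aux_iic (lam/2) R hc2).2]
        have hιi : ∀ i ∈ Finset.univ.erase (0 : Fin n), ∫ t, g i t
            = Real.sqrt (4*π*R/lam) := by
          intro i hi
          simp only [hg_def, if_neg (Finset.mem_erase.1 hi).1]
          rw [integral_gaussian]
          congr 1
          field_simp
        rw [h1, hι0, Finset.prod_congr rfl hιi, Finset.prod_const,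
          Finset.card_erase_of_mem (Finset.mem_univ 0), Finset.card_univ, Fintype.card_fin]
        apply le_of_eq
        have he : Real.exp (lam/2*R) * Real.exp (lam/2*R) = Real.exp (lam*R) := by
          rw [← Real.exp_add]; congr 1; ring
        have h2 : (lam/2)⁻¹ = 2/lam := by
          field_simp
        rw [h2, show Real.exp (lam/2*R) * (2/lam * Real.exp (lam/2*R))
          = 2/lam * (Real.exp (lam/2*R) * Real.exp (lam/2*R)) from by ring, he]

lemma aux_ball (n : ℕ) [NeZero n] (lam R : ℝ) (hlam : 0 < lam) (hR : 0 < R)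
    (u : EuclideanSpace ℝ (Fin n)) (hu : ‖u‖ = 1) :
    ∫⁻ y : EuclideanSpace ℝ (Fin n), Set.indicator (Metric.closedBall 0 R)
        (fun y => ENNReal.ofReal (Real.exp (lam * inner ℝ u y))) y
      ≤ ENNReal.ofReal ((2/lam) * Real.exp (lam*R) * Real.sqrt (4*π*R/lam) ^ (n-1)) := by
  have hortho : Orthonormal ℝ (Set.restrict {(0 : Fin n)} (fun _ => u)) := by
    constructor
    · intro i; exact hu
    · intro i j hij
      exfalso; apply hij
      ext
      have hi := i.2; have hj := j.2
      simp only [Set.mem_singleton_iff] at hi hj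
      rw [hi, hj]
  have hcard : Module.finrank ℝ (EuclideanSpace ℝ (Fin n)) = Fintype.card (Fin n) :=
    finrank_euclideanSpace_fin.trans (Fintype.card_fin n).symm
  obtain ⟨b, hb0⟩ := hortho.exists_orthonormalBasis_extension_of_card_eq hcard
  have hbu : b 0 = u := hb0 0 rfl
  have hinner : ∀ y : EuclideanSpace ℝ (Fin n), (inner ℝ u y : ℝ) = b.repr y 0 := by
    intro y
    rw [← hbu, b.repr_apply_apply y 0]
  set G : (Fin n → ℝ) → ℝ≥0∞ := Set.indicator {w : Fin n → ℝ | ∑ i, w i ^ 2 ≤ R^2}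
      (fun w => ENNReal.ofReal (Real.exp (lam * w 0))) with hG_def
  have hGmeas : Measurable G := by
    apply Measurable.indicator
    · exact ENNReal.measurable_ofReal.comp
        (Real.measurable_exp.comp (by fun_prop))
    · exact measurableSet_le (by fun_prop) measurable_const
  have hP : MeasurePreserving
      (fun y : EuclideanSpace ℝ (Fin n) => (MeasurableEquiv.toLp 2 (Fin n → ℝ)).symm (b.repr y))
      volume volume :=
    (EuclideanSpace.volume_preserving_symm_measurableEquiv_toLp (Fin n)).comp b.measurePreserving_repr
  have hkey : ∀ y : EuclideanSpace ℝ (Fin n),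
      Set.indicator (Metric.closedBall 0 R)
        (fun y => ENNReal.ofReal (Real.exp (lam * inner ℝ u y))) y
      = G ((MeasurableEquiv.toLp 2 (Fin n → ℝ)).symm (b.repr y)) := by
    intro y
    have hco : ∀ i, ((MeasurableEquiv.toLp 2 (Fin n → ℝ)).symm (b.repr y)) i = b.repr y i :=
      fun i => rfl
    have hmem : y ∈ Metric.closedBall (0 : EuclideanSpace ℝ (Fin n)) R
        ↔ ((MeasurableEquiv.toLp 2 (Fin n → ℝ)).symm (b.repr y))
            ∈ {w : Fin n → ℝ | ∑ i, w i ^ 2 ≤ R^2} := by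
      rw [Metric.mem_closedBall, dist_zero_right, ← b.repr.norm_map y]
      rw [EuclideanSpace.norm_eq]
      rw [Real.sqrt_le_left hR.le]
      simp only [Set.mem_setOf_eq, hco, Real.norm_eq_abs, sq_abs]
    by_cases hy : y ∈ Metric.closedBall (0 : EuclideanSpace ℝ (Fin n)) R
    · rw [Set.indicator_of_mem hy, hG_def, Set.indicator_of_mem (hmem.1 hy)]
      rw [hinner y]
      rfl
    · rw [Set.indicator_of_notMem hy, hG_def,
        Set.indicator_of_notMem (fun h => hy (hmem.2 h))]
  calc ∫⁻ y : EuclideanSpace ℝ (Fin n), Set.indicator (Metric.closedBall 0 R)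
        (fun y => ENNReal.ofReal (Real.exp (lam * inner ℝ u y))) y
      = ∫⁻ y : EuclideanSpace ℝ (Fin n),
          G ((MeasurableEquiv.toLp 2 (Fin n → ℝ)).symm (b.repr y)) := by
        exact lintegral_congr hkey
    _ = ∫⁻ w : Fin n → ℝ, G w := hP.lintegral_comp hGmeas
    _ ≤ _ := aux_pi n lam R hlam hR

lemma aux_polar (n : ℕ) [NeZero n] (lam r : ℝ) (hlam : 0 < lam) (hr : 1 ≤ r)
    (u : EuclideanSpace ℝ (Fin n)) (hu : ‖u‖ = 1) :
    ENNReal.ofReal (r^(n-1)) * ∫⁻ ω : Metric.sphere (0 : EuclideanSpace ℝ (Fin n)) 1,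
        ENNReal.ofReal (Real.exp (lam * r * inner ℝ u (ω : EuclideanSpace ℝ (Fin n))))
        ∂((volume : Measure (EuclideanSpace ℝ (Fin n))).toSphere)
    ≤ (∫⁻ y : EuclideanSpace ℝ (Fin n), Set.indicator (Metric.closedBall 0 (r+1))
        (fun y => ENNReal.ofReal (Real.exp (lam * inner ℝ u y))) y)
      + ENNReal.ofReal ((r+1)^(n-1)) * ((volume : Measure (EuclideanSpace ℝ (Fin n))).toSphere)
          Set.univ := by
  have hr0 : 0 < r := lt_of_lt_of_le zero_lt_one hr
  set σ := (volume : Measure (EuclideanSpace ℝ (Fin n))).toSphere with hσ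
  -- inner as continuous function on sphere
  have hinner_cont : Continuous fun ω : Metric.sphere (0 : EuclideanSpace ℝ (Fin n)) 1 =>
      (inner ℝ u (ω : EuclideanSpace ℝ (Fin n)) : ℝ) :=
    Continuous.inner continuous_const continuous_subtype_val
  set ψ : ℝ → ℝ≥0∞ := fun t => ∫⁻ ω : Metric.sphere (0 : EuclideanSpace ℝ (Fin n)) 1,
      ENNReal.ofReal (Real.exp (lam * t * inner ℝ u (ω : EuclideanSpace ℝ (Fin n)))) ∂σ with hψ
  set ind : ℝ → ℝ≥0∞ := Set.indicator (Iic (r+1)) (fun _ => (1:ℝ≥0∞)) with hind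
  set Θ : ℝ → ℝ≥0∞ := fun t => ind t * ψ t with hΘ
  -- pointwise comparison on Ioc r (r+1)
  have hcore : ∀ t ∈ Ioc r (r+1),
      ENNReal.ofReal (r^(n-1)) * ψ r
        ≤ ENNReal.ofReal (t^(n-1)) * Θ t + ENNReal.ofReal ((r+1)^(n-1)) * σ Set.univ := by
    intro t ht
    have h1 : ψ r ≤ ψ t + σ Set.univ := by
      have hpt : ∀ ω : Metric.sphere (0 : EuclideanSpace ℝ (Fin n)) 1,
          ENNReal.ofReal (Real.exp (lam * r * inner ℝ u (ω : EuclideanSpace ℝ (Fin n))))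
          ≤ ENNReal.ofReal (Real.exp (lam * t * inner ℝ u (ω : EuclideanSpace ℝ (Fin n)))) + 1 := by
        intro ω
        set s : ℝ := inner ℝ u (ω : EuclideanSpace ℝ (Fin n))
        by_cases hs0 : 0 ≤ s
        · have hle : lam * r * s ≤ lam * t * s :=
            mul_le_mul_of_nonneg_right (mul_le_mul_of_nonneg_left ht.1.le hlam.le) hs0
          exact le_trans (ENNReal.ofReal_le_ofReal (Real.exp_le_exp.2 hle))
            (self_le_add_right _ _)
        · push_neg at hs0
          have hle : lam * r * s ≤ 0 :=
            le_of_lt (mul_neg_of_pos_of_neg (mul_pos hlam hr0) hs0)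
          have : Real.exp (lam * r * s) ≤ 1 := by
            calc Real.exp (lam * r * s) ≤ Real.exp 0 := Real.exp_le_exp.2 hle
            _ = 1 := Real.exp_zero
          calc ENNReal.ofReal (Real.exp (lam * r * s)) ≤ ENNReal.ofReal 1 :=
              ENNReal.ofReal_le_ofReal this
            _ = 1 := ENNReal.ofReal_one
            _ ≤ _ := le_add_self
      calc ψ r ≤ ∫⁻ ω : Metric.sphere (0 : EuclideanSpace ℝ (Fin n)) 1,
            (ENNReal.ofReal (Real.exp (lam * t * inner ℝ u (ω : EuclideanSpace ℝ (Fin n)))) + 1)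
            ∂σ := lintegral_mono hpt
        _ = ψ t + σ Set.univ := by
          rw [lintegral_add_right _ measurable_const, lintegral_one]
    have hΘt : Θ t = ψ t := by
      rw [hΘ]
      simp only
      rw [hind, Set.indicator_of_mem (by simpa using ht.2 : t ∈ Iic (r+1)), one_mul]
    calc ENNReal.ofReal (r^(n-1)) * ψ r
        ≤ ENNReal.ofReal (t^(n-1)) * (ψ t + σ Set.univ) :=
          mul_le_mul' (ENNReal.ofReal_le_ofReal (pow_le_pow_left₀ hr0.le ht.1.le _)) h1
      _ = ENNReal.ofReal (t^(n-1)) * ψ t + ENNReal.ofReal (t^(n-1)) * σ Set.univ := mul_add _ _ _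
      _ ≤ ENNReal.ofReal (t^(n-1)) * Θ t + ENNReal.ofReal ((r+1)^(n-1)) * σ Set.univ := by
          rw [hΘt]
          exact add_le_add le_rfl (mul_le_mul' (ENNReal.ofReal_le_ofReal
            (pow_le_pow_left₀ (le_trans hr0.le ht.1.le) ht.2 _)) le_rfl)
  -- measurability of Θ-type integrand
  have hψmeas : Measurable ψ := by
    have hf : Measurable (Function.uncurry fun (ω : Metric.sphere
        (0 : EuclideanSpace ℝ (Fin n)) 1) (t : ℝ) =>
        ENNReal.ofReal (Real.exp (lam * t * inner ℝ u (ω : EuclideanSpace ℝ (Fin n))))) := by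
      refine Continuous.measurable ?_
      refine ENNReal.continuous_ofReal.comp ?_
      refine Real.continuous_exp.comp ?_
      exact (continuous_const.mul continuous_snd).mul (hinner_cont.comp continuous_fst)
    exact hf.lintegral_prod_left'
  have hindmeas : Measurable ind := measurable_const.indicator measurableSet_Iic
  have hΘmeas0 : Measurable Θ := hindmeas.mul hψmeas
  have hΘmeas : Measurable fun t : ℝ => ENNReal.ofReal (t^(n-1)) * Θ t :=
    ((measurable_id.pow_const (n-1)).ennreal_ofReal).mul hΘmeas0
  -- the ball integral identity
  have hball : ∫⁻ t in Ioi (0:ℝ), ENNReal.ofReal (t^(n-1)) * Θ t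
      = ∫⁻ y : EuclideanSpace ℝ (Fin n), Set.indicator (Metric.closedBall 0 (r+1))
        (fun y => ENNReal.ofReal (Real.exp (lam * inner ℝ u y))) y := by
    have hdim : Module.finrank ℝ (EuclideanSpace ℝ (Fin n)) = n := finrank_euclideanSpace_fin
    set Φ : Metric.sphere (0 : EuclideanSpace ℝ (Fin n)) 1 × Ioi (0:ℝ) → ℝ≥0∞ :=
      fun p => ind (p.2 : ℝ) *
        ENNReal.ofReal (Real.exp (lam * (p.2 : ℝ) * inner ℝ u (p.1 : EuclideanSpace ℝ (Fin n))))
      with hΦ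
    have hindmeas : Measurable ind := measurable_const.indicator measurableSet_Iic
    have hΦmeas : Measurable Φ := by
      apply Measurable.mul
      · exact hindmeas.comp (continuous_subtype_val.comp continuous_snd).measurable
      · refine Continuous.measurable ?_
        refine ENNReal.continuous_ofReal.comp ?_
        refine Real.continuous_exp.comp ?_
        exact (continuous_const.mul (continuous_subtype_val.comp continuous_snd)).mul
          (hinner_cont.comp continuous_fst)
    have hindne : ∀ t : ℝ, ind t ≠ ⊤ := by
      intro t
      rw [hind]
      by_cases h : t ∈ Iic (r+1)
      · rw [Set.indicator_of_mem h]; exact ENNReal.one_ne_top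
      · rw [Set.indicator_of_notMem h]; exact ENNReal.zero_ne_top
    calc ∫⁻ t in Ioi (0:ℝ), ENNReal.ofReal (t^(n-1)) * Θ t ∂volume
        = ∫⁻ t : Ioi (0:ℝ), ENNReal.ofReal ((t:ℝ)^(n-1)) * Θ (t:ℝ)
            ∂((volume : Measure ℝ).comap Subtype.val) := by
          exact (lintegral_subtype_comap measurableSet_Ioi
            (fun t => ENNReal.ofReal (t^(n-1)) * Θ t)).symm
      _ = ∫⁻ t : Ioi (0:ℝ), Θ (t:ℝ) ∂(Measure.volumeIoiPow (n-1)) := by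
          rw [Measure.volumeIoiPow]
          exact (lintegral_withDensity_eq_lintegral_mul _
              (by fun_prop : Measurable fun t : Ioi (0:ℝ) => ENNReal.ofReal ((t:ℝ)^(n-1)))
              (hΘmeas0.comp measurable_subtype_coe)).symm
      _ = ∫⁻ p : Metric.sphere (0 : EuclideanSpace ℝ (Fin n)) 1 × Ioi (0:ℝ), Φ p
            ∂(σ.prod (Measure.volumeIoiPow (n-1))) := by
          rw [lintegral_prod_symm Φ hΦmeas.aemeasurable]
          apply lintegral_congr
          intro t
          rw [hΦ]
          simp only
          rw [lintegral_const_mul' _ _ (hindne (t:ℝ))]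
      _ = ∫⁻ x : ({0}ᶜ : Set (EuclideanSpace ℝ (Fin n))),
            Φ (homeomorphUnitSphereProd (EuclideanSpace ℝ (Fin n)) x)
            ∂((volume : Measure (EuclideanSpace ℝ (Fin n))).comap Subtype.val) := by
          have hmp := (Measure.measurePreserving_homeomorphUnitSphereProd
            (volume : Measure (EuclideanSpace ℝ (Fin n)))).lintegral_comp hΦmeas
          rw [hdim] at hmp
          exact hmp.symm
      _ = ∫⁻ y in ({0}ᶜ : Set (EuclideanSpace ℝ (Fin n))),
            Set.indicator (Metric.closedBall 0 (r+1))
              (fun y => ENNReal.ofReal (Real.exp (lam * inner ℝ u y))) y ∂volume := by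
          rw [← lintegral_subtype_comap (measurableSet_singleton
            (0 : EuclideanSpace ℝ (Fin n))).compl]
          apply lintegral_congr
          intro x
          have hx0 : (x : EuclideanSpace ℝ (Fin n)) ≠ 0 := x.2
          have hnorm : ‖(x : EuclideanSpace ℝ (Fin n))‖ ≠ 0 := norm_ne_zero_iff.2 hx0
          rw [hΦ]
          simp only [homeomorphUnitSphereProd_apply_fst_coe,
            homeomorphUnitSphereProd_apply_snd_coe]
          have hinner2 : (inner ℝ u (‖(x : EuclideanSpace ℝ (Fin n))‖⁻¹
              • (x : EuclideanSpace ℝ (Fin n))) : ℝ)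
              = ‖(x : EuclideanSpace ℝ (Fin n))‖⁻¹ * inner ℝ u (x : EuclideanSpace ℝ (Fin n)) :=
            real_inner_smul_right _ _ _
          rw [hinner2]
          have harg : ∀ A : ℝ, lam * ‖(x : EuclideanSpace ℝ (Fin n))‖ *
              (‖(x : EuclideanSpace ℝ (Fin n))‖⁻¹ * A) = lam * A := by
            intro A
            field_simp
          rw [harg]
          by_cases hy : (x : EuclideanSpace ℝ (Fin n)) ∈ Metric.closedBall
              (0 : EuclideanSpace ℝ (Fin n)) (r+1)
          · rw [Set.indicator_of_mem hy, hind, Set.indicator_of_mem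
              (by rwa [Metric.mem_closedBall, dist_zero_right] at hy), one_mul]
          · rw [Set.indicator_of_notMem hy, hind, Set.indicator_of_notMem
              (by rwa [Metric.mem_closedBall, dist_zero_right] at hy), zero_mul]
      _ = _ := by
          rw [restrict_compl_singleton]
  calc ENNReal.ofReal (r^(n-1)) * ψ r
      = ∫⁻ _ in Ioc r (r+1), ENNReal.ofReal (r^(n-1)) * ψ r ∂volume := by
        rw [setLIntegral_const, Real.volume_Ioc]
        norm_num
    _ ≤ ∫⁻ t in Ioc r (r+1),
          (ENNReal.ofReal (t^(n-1)) * Θ t + ENNReal.ofReal ((r+1)^(n-1)) * σ Set.univ) ∂volume :=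
        setLIntegral_mono (hΘmeas.add_const _) hcore
    _ = (∫⁻ t in Ioc r (r+1), ENNReal.ofReal (t^(n-1)) * Θ t ∂volume)
          + ENNReal.ofReal ((r+1)^(n-1)) * σ Set.univ := by
        rw [lintegral_add_right _ measurable_const, setLIntegral_const, Real.volume_Ioc]
        norm_num
    _ ≤ (∫⁻ t in Ioi (0:ℝ), ENNReal.ofReal (t^(n-1)) * Θ t ∂volume)
          + ENNReal.ofReal ((r+1)^(n-1)) * σ Set.univ := by
        gcongr
        exact (fun t ht => lt_trans hr0 ht.1)
    _ = _ := by rw [hball]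

lemma aux_exp_lower (n : ℕ) (hn : 3 ≤ n) (lam r : ℝ) (hlam : 0 < lam) (hr : 1 ≤ r) :
    (1+r) ^ (((n:ℝ)-1)/2) ≤ 2^n * ((n:ℝ)/lam)^n * Real.exp (lam*r) := by
  have hr0 : (0:ℝ) < r := lt_of_lt_of_le zero_lt_one hr
  have h1r : (1:ℝ) ≤ 1 + r := by linarith
  have hn0 : (0:ℝ) < n := by positivity
  have step1 : (1+r) ^ (((n:ℝ)-1)/2) ≤ (1+r) ^ (n:ℝ) := by
    apply Real.rpow_le_rpow_of_exponent_le h1r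
    nlinarith
  have step2 : (1+r) ^ (n:ℝ) = (1+r)^n := Real.rpow_natCast _ n
  have step3 : (1+r)^n ≤ (2*r)^n := pow_le_pow_left₀ (by linarith) (by linarith) n
  have step4 : (2*r)^n = 2^n * r^n := mul_pow 2 r n
  have step5 : r^n ≤ ((n:ℝ)/lam)^n * Real.exp (lam*r) := by
    have hx : lam * r / n ≤ Real.exp (lam * r / n) := by
      have := Real.add_one_le_exp (lam * r / n)
      linarith
    have hpow : (lam * r / n)^n ≤ Real.exp (lam * r / n)^n :=
      pow_le_pow_left₀ (by positivity) hx n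
    have hexp : Real.exp (lam * r / n)^n = Real.exp (lam * r) := by
      rw [← Real.exp_nat_mul]
      congr 1
      field_simp
    have hrn : r^n = ((n:ℝ)/lam)^n * (lam * r / n)^n := by
      rw [← mul_pow]
      congr 1
      field_simp
    rw [hrn, ← hexp]
    exact mul_le_mul_of_nonneg_left hpow (by positivity)
  calc (1+r) ^ (((n:ℝ)-1)/2) ≤ (1+r)^n := step2 ▸ step1
    _ ≤ 2^n * r^n := step4 ▸ step3
    _ ≤ 2^n * (((n:ℝ)/lam)^n * Real.exp (lam*r)) :=
        mul_le_mul_of_nonneg_left step5 (by positivity)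
    _ = 2^n * ((n:ℝ)/lam)^n * Real.exp (lam*r) := by ring

lemma aux_arith (n : ℕ) (hn : 3 ≤ n) (lam r s : ℝ) (hlam : 0 < lam) (hr : 1 ≤ r) (hs : 0 ≤ s) :
    ((2/lam)*Real.exp (lam*(r+1))*Real.sqrt (4*π*(r+1)/lam)^(n-1) + (r+1)^(n-1)*s) / r^(n-1)
    ≤ ((2/lam)*Real.exp lam * (8*π/lam)^(((n:ℝ)-1)/2) * 2^(((n:ℝ)-1)/2)
        + 2^(n-1)*s*(2^n*((n:ℝ)/lam)^n))
      * (1+r) ^ (-((n:ℝ)-1)/2) * Real.exp (lam*r) := by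
  have hr0 : (0:ℝ) < r := lt_of_lt_of_le zero_lt_one hr
  set a : ℝ := ((n:ℝ)-1)/2 with ha
  have hn1 : (1:ℝ) ≤ (n:ℝ) := by exact_mod_cast (by omega : 1 ≤ n)
  have ha0 : 0 ≤ a := by rw [ha]; linarith
  have h1r : (0:ℝ) < 1 + r := by linarith
  have hcast : ((n-1:ℕ):ℝ) = (n:ℝ)-1 := by
    rw [Nat.cast_sub (by omega)]
    norm_num
  have hrnat : r^(n-1) = r ^ (2*a) := by
    rw [← Real.rpow_natCast r (n-1), hcast, ha]
    congr 1
    ring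
  have hrpos : (0:ℝ) < r^(n-1) := by positivity
  -- key rpow facts
  have hpowsum : r ^ a * r ^ a = r ^ (2*a) := by
    rw [← Real.rpow_add hr0]; congr 1; ring
  have h2ra : (1+r) ^ a ≤ 2^a * r^a := by
    calc (1+r) ^ a ≤ (2*r) ^ a := Real.rpow_le_rpow (by linarith) (by linarith) ha0
      _ = 2^a * r^a := Real.mul_rpow (by norm_num) hr0.le
  have hcancel : (1+r) ^ a * (1+r) ^ (-a) = 1 := by
    rw [← Real.rpow_add h1r]; norm_num
  have hexp_neg : (-((n:ℝ)-1)/2) = -a := by rw [ha]; ring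
  rw [hexp_neg, div_le_iff₀ hrpos]
  have hnegnn : 0 ≤ (1+r) ^ (-a) := Real.rpow_nonneg h1r.le _
  -- bound for r^a
  have hra_bound : r ^ a ≤ 2^a * r ^ (2*a) * (1+r) ^ (-a) := by
    have h1 : r^a * (1+r)^a ≤ 2^a * r ^ (2*a) := by
      calc r^a * (1+r)^a ≤ r^a * (2^a * r^a) :=
            mul_le_mul_of_nonneg_left h2ra (Real.rpow_nonneg hr0.le _)
        _ = 2^a * (r^a * r^a) := by ring
        _ = 2^a * r^(2*a) := by rw [hpowsum]
    calc r ^ a = r^a * ((1+r)^a * (1+r)^(-a)) := by rw [hcancel]; ring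
      _ = (r^a * (1+r)^a) * (1+r)^(-a) := by ring
      _ ≤ (2^a * r ^ (2*a)) * (1+r)^(-a) := mul_le_mul_of_nonneg_right h1 hnegnn
      _ = 2^a * r ^ (2*a) * (1+r) ^ (-a) := by ring
  -- first term
  have hT1 : (2/lam)*Real.exp (lam*(r+1))*Real.sqrt (4*π*(r+1)/lam)^(n-1)
      ≤ ((2/lam)*Real.exp lam * (8*π/lam)^a * 2^a) * (1+r) ^ (-a) * Real.exp (lam*r)
        * r^(n-1) := by
    have hsq_arg : 4*π*(r+1)/lam ≤ (8*π/lam) * r := by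
      rw [div_le_iff₀ hlam]
      have : (8*π/lam) * r * lam = 8*π*r := by field_simp
      rw [this]
      nlinarith [pi_pos]
    have hsq_nn : (0:ℝ) ≤ 4*π*(r+1)/lam := by positivity
    have hsqr : Real.sqrt (4*π*(r+1)/lam)^(n-1) ≤ Real.sqrt ((8*π/lam)*r)^(n-1) :=
      pow_le_pow_left₀ (Real.sqrt_nonneg _) (Real.sqrt_le_sqrt hsq_arg) _
    have hsq_eq : Real.sqrt ((8*π/lam)*r)^(n-1) = (8*π/lam)^a * r^a := by
      rw [← Real.rpow_natCast (Real.sqrt ((8*π/lam)*r)) (n-1),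
        Real.sqrt_eq_rpow, ← Real.rpow_mul (by positivity), hcast]
      rw [show (1/2) * ((n:ℝ)-1) = a by rw [ha]; ring]
      exact Real.mul_rpow (by positivity) hr0.le
    have hexpadd : Real.exp (lam*(r+1)) = Real.exp lam * Real.exp (lam*r) := by
      rw [← Real.exp_add]; congr 1; ring
    calc (2/lam)*Real.exp (lam*(r+1))*Real.sqrt (4*π*(r+1)/lam)^(n-1)
        ≤ (2/lam)*Real.exp (lam*(r+1))*((8*π/lam)^a * r^a) := by
          apply mul_le_mul_of_nonneg_left (le_trans hsqr (le_of_eq hsq_eq)) (by positivity)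
      _ = ((2/lam)*Real.exp lam*(8*π/lam)^a) * Real.exp (lam*r) * r^a := by
          rw [hexpadd]; ring
      _ ≤ ((2/lam)*Real.exp lam*(8*π/lam)^a) * Real.exp (lam*r)
            * (2^a * r ^ (2*a) * (1+r) ^ (-a)) := by
          apply mul_le_mul_of_nonneg_left hra_bound (by positivity)
      _ = ((2/lam)*Real.exp lam * (8*π/lam)^a * 2^a) * (1+r) ^ (-a) * Real.exp (lam*r)
            * r^(2*a) := by ring
      _ = _ := by rw [← hrnat]
  -- second term
  have hT2 : (r+1)^(n-1)*s
      ≤ (2^(n-1)*s*(2^n*((n:ℝ)/lam)^n)) * (1+r) ^ (-a) * Real.exp (lam*r) * r^(n-1) := by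
    have h1 : (r+1)^(n-1) ≤ 2^(n-1) * r^(n-1) := by
      rw [← mul_pow]
      exact pow_le_pow_left₀ (by linarith) (by linarith) _
    have hM : 1 ≤ (2^n*((n:ℝ)/lam)^n) * ((1+r) ^ (-a) * Real.exp (lam*r)) := by
      have := aux_exp_lower n hn lam r hlam hr
      calc (1:ℝ) = (1+r)^a * (1+r)^(-a) := hcancel.symm
        _ ≤ (2^n*((n:ℝ)/lam)^n * Real.exp (lam*r)) * (1+r)^(-a) :=
            mul_le_mul_of_nonneg_right this hnegnn
        _ = (2^n*((n:ℝ)/lam)^n) * ((1+r) ^ (-a) * Real.exp (lam*r)) := by ring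
    calc (r+1)^(n-1)*s ≤ (2^(n-1) * r^(n-1)) * s := by
          apply mul_le_mul_of_nonneg_right h1 hs
      _ = (2^(n-1) * s * r^(n-1)) * 1 := by ring
      _ ≤ (2^(n-1) * s * r^(n-1)) * ((2^n*((n:ℝ)/lam)^n) * ((1+r) ^ (-a) * Real.exp (lam*r)))
          := by apply mul_le_mul_of_nonneg_left hM (by positivity)
      _ = (2^(n-1)*s*(2^n*((n:ℝ)/lam)^n)) * (1+r) ^ (-a) * Real.exp (lam*r) * r^(n-1) := by
          ring
  calc (2/lam)*Real.exp (lam*(r+1))*Real.sqrt (4*π*(r+1)/lam)^(n-1) + (r+1)^(n-1)*s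
      ≤ ((2/lam)*Real.exp lam * (8*π/lam)^a * 2^a) * (1+r) ^ (-a) * Real.exp (lam*r) * r^(n-1)
        + (2^(n-1)*s*(2^n*((n:ℝ)/lam)^n)) * (1+r) ^ (-a) * Real.exp (lam*r) * r^(n-1) :=
        add_le_add hT1 hT2
    _ = ((2/lam)*Real.exp lam * (8*π/lam)^a * 2^a + 2^(n-1)*s*(2^n*((n:ℝ)/lam)^n))
          * (1+r) ^ (-a) * Real.exp (lam*r) * r^(n-1) := by ring

theorem stmt_8 (n : ℕ) (hn : 3 ≤ n) (lam : ℝ) (hlam : 0 < lam) :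
    ∃ C : ℝ, 0 < C ∧
      ∀ x : EuclideanSpace ℝ (Fin n),
        (∫ ω : Metric.sphere (0 : EuclideanSpace ℝ (Fin n)) 1,
            Real.exp (lam * inner ℝ x (ω : EuclideanSpace ℝ (Fin n)))
          ∂((volume : Measure (EuclideanSpace ℝ (Fin n))).toSphere))
        ≤ C * (1 + ‖x‖) ^ (-((n : ℝ) - 1) / 2) * Real.exp (lam * ‖x‖) := by
  haveI : NeZero n := ⟨by omega⟩
  set σ := (volume : Measure (EuclideanSpace ℝ (Fin n))).toSphere with hσ_def
  set s := (σ Set.univ).toReal with hs_def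
  have hs0 : 0 ≤ s := ENNReal.toReal_nonneg
  have hn1 : (1:ℝ) ≤ (n:ℝ) := by exact_mod_cast (by omega : 1 ≤ n)
  set a : ℝ := ((n:ℝ)-1)/2 with ha_def
  have ha0 : 0 ≤ a := by rw [ha_def]; linarith
  set K : ℝ := (2/lam)*Real.exp lam * (8*π/lam)^a * 2^a with hK_def
  set Q : ℝ := 2^(n-1)*s*(2^n*((n:ℝ)/lam)^n) with hQ_def
  have hK0 : 0 ≤ K := by rw [hK_def]; positivity
  have hQ0 : 0 ≤ Q := by rw [hQ_def]; positivity
  set C : ℝ := s * 2^a + (K + Q) + 1 with hC_def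
  have hs2a : 0 ≤ s * (2:ℝ)^a := by positivity
  refine ⟨C, by rw [hC_def]; linarith, ?_⟩
  intro x
  set r := ‖x‖ with hr_def
  have hr0 : 0 ≤ r := norm_nonneg x
  have h1r : (0:ℝ) < 1 + r := by linarith
  have hXpos : 0 < (1 + r) ^ (-((n:ℝ)-1)/2) := Real.rpow_pos_of_pos h1r _
  have hEpos : 0 < Real.exp (lam * r) := Real.exp_pos _
  have hf_cont : Continuous fun ω : Metric.sphere (0 : EuclideanSpace ℝ (Fin n)) 1 =>
      Real.exp (lam * inner ℝ x (ω : EuclideanSpace ℝ (Fin n))) :=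
    Real.continuous_exp.comp (continuous_const.mul
      (Continuous.inner continuous_const continuous_subtype_val))
  by_cases hxr : 1 ≤ r
  · -- main case
    have hx0 : x ≠ 0 := by
      intro h
      rw [hr_def, h, norm_zero] at hxr; linarith
    set u : EuclideanSpace ℝ (Fin n) := (‖x‖⁻¹ : ℝ) • x with hu_def
    have hu : ‖u‖ = 1 := norm_smul_inv_norm hx0
    have hnorm_ne : ‖x‖ ≠ 0 := norm_ne_zero_iff.2 hx0
    have hxu : (r : ℝ) • u = x := by
      rw [hu_def, hr_def]
      exact smul_inv_smul₀ hnorm_ne x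
    have hinner_eq : ∀ ω : Metric.sphere (0 : EuclideanSpace ℝ (Fin n)) 1,
        (inner ℝ x (ω : EuclideanSpace ℝ (Fin n)) : ℝ)
          = r * inner ℝ u (ω : EuclideanSpace ℝ (Fin n)) := by
      intro ω
      rw [← hxu, real_inner_smul_left]
    set L := ∫⁻ ω : Metric.sphere (0 : EuclideanSpace ℝ (Fin n)) 1,
        ENNReal.ofReal (Real.exp (lam * r * inner ℝ u (ω : EuclideanSpace ℝ (Fin n)))) ∂σ
      with hL_def
    have hI : (∫ ω : Metric.sphere (0 : EuclideanSpace ℝ (Fin n)) 1,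
        Real.exp (lam * inner ℝ x (ω : EuclideanSpace ℝ (Fin n))) ∂σ) = L.toReal := by
      rw [integral_eq_lintegral_of_nonneg_ae
        (Filter.Eventually.of_forall fun ω => Real.exp_nonneg _) hf_cont.aestronglyMeasurable]
      congr 1
      rw [hL_def]
      apply lintegral_congr
      intro ω
      rw [hinner_eq ω, mul_assoc]
    set B : ℝ := (2/lam)*Real.exp (lam*(r+1))*Real.sqrt (4*π*(r+1)/lam)^(n-1) with hB_def
    have hB0 : 0 ≤ B := by rw [hB_def]; positivity
    set W : ℝ := B + (r+1)^(n-1)*s with hW_def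
    have hW0 : 0 ≤ W := by rw [hW_def]; positivity
    have hσtop : σ Set.univ ≠ ⊤ := measure_ne_top σ _
    have hchain : ENNReal.ofReal (r^(n-1)) * L ≤ ENNReal.ofReal W := by
      calc ENNReal.ofReal (r^(n-1)) * L
          ≤ (∫⁻ y : EuclideanSpace ℝ (Fin n), Set.indicator (Metric.closedBall 0 (r+1))
              (fun y => ENNReal.ofReal (Real.exp (lam * inner ℝ u y))) y)
            + ENNReal.ofReal ((r+1)^(n-1)) * σ Set.univ :=
            aux_polar n lam r hlam hxr u hu
        _ ≤ ENNReal.ofReal B + ENNReal.ofReal ((r+1)^(n-1)) * σ Set.univ :=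
            add_le_add (aux_ball n lam (r+1) hlam (by linarith) u hu) le_rfl
        _ = ENNReal.ofReal W := by
            rw [← ENNReal.ofReal_toReal hσtop, ← hs_def,
              ← ENNReal.ofReal_mul (by positivity), ← ENNReal.ofReal_add hB0 (by positivity),
              hW_def]
    have hrpow_pos : (0:ℝ) < r^(n-1) := by positivity
    have hLle : L ≤ ENNReal.ofReal (W / r^(n-1)) := by
      rw [ENNReal.ofReal_div_of_pos hrpow_pos]
      rw [ENNReal.le_div_iff_mul_le
        (Or.inl (ne_of_gt (ENNReal.ofReal_pos.2 hrpow_pos))) (Or.inl ENNReal.ofReal_ne_top)]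
      rw [mul_comm]
      exact hchain
    have htoReal : L.toReal ≤ W / r^(n-1) :=
      ENNReal.toReal_le_of_le_ofReal (by positivity) hLle
    rw [hI]
    calc L.toReal ≤ W / r^(n-1) := htoReal
      _ ≤ (K + Q) * (1+r) ^ (-((n:ℝ)-1)/2) * Real.exp (lam*r) := by
          rw [hW_def, hB_def, hK_def, hQ_def, ha_def]
          exact aux_arith n hn lam r s hlam hxr hs0
      _ ≤ C * (1+r) ^ (-((n:ℝ)-1)/2) * Real.exp (lam*r) := by
          apply mul_le_mul_of_nonneg_right _ hEpos.le
          apply mul_le_mul_of_nonneg_right _ hXpos.le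
          rw [hC_def]; linarith
  · -- small case
    push_neg at hxr
    have hf_int : Integrable (fun ω : Metric.sphere (0 : EuclideanSpace ℝ (Fin n)) 1 =>
        Real.exp (lam * inner ℝ x (ω : EuclideanSpace ℝ (Fin n)))) σ := by
      apply Integrable.mono' (integrable_const (Real.exp (lam * r)))
        hf_cont.aestronglyMeasurable
      apply Filter.Eventually.of_forall
      intro ω
      rw [Real.norm_eq_abs, abs_of_nonneg (Real.exp_nonneg _), Real.exp_le_exp]
      apply mul_le_mul_of_nonneg_left _ hlam.le
      calc (inner ℝ x (ω : EuclideanSpace ℝ (Fin n)) : ℝ)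
          ≤ ‖x‖ * ‖(ω : EuclideanSpace ℝ (Fin n))‖ := real_inner_le_norm _ _
        _ = r := by
            rw [mem_sphere_zero_iff_norm.1 ω.2, mul_one, hr_def]
    have hbound : (∫ ω : Metric.sphere (0 : EuclideanSpace ℝ (Fin n)) 1,
        Real.exp (lam * inner ℝ x (ω : EuclideanSpace ℝ (Fin n))) ∂σ) ≤ s * Real.exp (lam * r) := by
      calc (∫ ω : Metric.sphere (0 : EuclideanSpace ℝ (Fin n)) 1,
          Real.exp (lam * inner ℝ x (ω : EuclideanSpace ℝ (Fin n))) ∂σ)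
          ≤ ∫ _ω : Metric.sphere (0 : EuclideanSpace ℝ (Fin n)) 1,
              Real.exp (lam * r) ∂σ := by
            apply integral_mono hf_int (integrable_const _)
            intro ω
            rw [Real.exp_le_exp]
            apply mul_le_mul_of_nonneg_left _ hlam.le
            calc (inner ℝ x (ω : EuclideanSpace ℝ (Fin n)) : ℝ)
                ≤ ‖x‖ * ‖(ω : EuclideanSpace ℝ (Fin n))‖ := real_inner_le_norm _ _
              _ = r := by rw [mem_sphere_zero_iff_norm.1 ω.2, mul_one, hr_def]
        _ = s * Real.exp (lam * r) := by
            rw [integral_const, smul_eq_mul, hs_def]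
            rfl
    apply le_trans hbound
    have hXlow : (2:ℝ)^(-a) ≤ (1+r) ^ (-((n:ℝ)-1)/2) := by
      rw [show (-((n:ℝ)-1)/2) = -a by rw [ha_def]; ring]
      rw [Real.rpow_neg h1r.le, Real.rpow_neg (by norm_num : (0:ℝ) ≤ 2)]
      apply inv_anti₀ (Real.rpow_pos_of_pos h1r _)
      exact Real.rpow_le_rpow h1r.le (by linarith) ha0
    have hs_eq : s = (s * 2^a) * (2:ℝ)^(-a) := by
      rw [mul_assoc, ← Real.rpow_add (by norm_num : (0:ℝ) < 2)]
      norm_num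
    calc s * Real.exp (lam * r) = ((s * 2^a) * (2:ℝ)^(-a)) * Real.exp (lam * r) := by
          rw [← hs_eq]
      _ ≤ ((s * 2^a) * (1+r) ^ (-((n:ℝ)-1)/2)) * Real.exp (lam * r) := by
          apply mul_le_mul_of_nonneg_right _ hEpos.le
          exact mul_le_mul_of_nonneg_left hXlow hs2a
      _ ≤ C * (1+r) ^ (-((n:ℝ)-1)/2) * Real.exp (lam * r) := by
          apply mul_le_mul_of_nonneg_right _ hEpos.le
          apply mul_le_mul_of_nonneg_right _ hXpos.le
          rw [hC_def]; linarith
end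

section
/- Let n ≥ 1, λ > 0, p > 1 and p' = p/(p-1). Let φ_λ be the Yordanov–Zhang eigenfunction on ℝⁿ. Then there exists C = C(n,p,λ) > 0 such that for every ρ ≥ 1, ∫_{B_ρ} φ_λ(x)^{p'} dx ≤ C ρ^{n-1-(n-1)p'/2} e^{p'λρ}. -/
/-!
A spherical cap `{ω : 1 - s ≤ ⟪v, ω⟫}` has surface measure `O(s ^ ((n - 1) / 2))`: after a
reflection taking `v` to a coordinate vector, the cone over the cap lies in a box with one side
of length `2` and `n - 1` sides of length `√(8 s)`. Cutting the sphere into the layers where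
`λ ⟪x, ω⟫ ∈ (λ‖x‖ - k - 1, λ‖x‖ - k]`, each of which lies in a cap with `s = (k + 1) / (λ‖x‖)`,
gives the pointwise bound `φ_λ(x) ≤ K (1 + ‖x‖) ^ (-(n - 1) / 2) e ^ (λ‖x‖)`.
In polar coordinates the integral of `φ_λ ^ p'` over `B_ρ` is then at most a multiple of
`∫₀^ρ y ^ (n - 1) (1 + y) ^ (-β) e ^ (μ y) dy` with `β = (n - 1) p' / 2`, `μ = p' λ`, and Peetre's
inequality `1 + ρ ≤ (1 + y) (1 + (ρ - y))` bounds this by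
`ρ ^ (n - 1) (1 + ρ) ^ (-β) e ^ (μ ρ) ∫₀^∞ (1 + t) ^ β e ^ (-μ t) dt`.
-/

open MeasureTheory Metric Set Real
open scoped RealInnerProductSpace Pointwise

section SphericalCap

variable {E : Type*} [NormedAddCommGroup E] [InnerProductSpace ℝ E]

def sphericalCap (v : E) (s : ℝ) : Set (sphere (0 : E) 1) :=
  {ω | 1 - s ≤ ⟪v, (ω : E)⟫}

lemma measurableSet_sphericalCap [MeasurableSpace E] [OpensMeasurableSpace E] (v : E) (s : ℝ) :
    MeasurableSet (sphericalCap v s) :=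
  (isClosed_le continuous_const (continuous_const.inner continuous_subtype_val)).measurableSet

lemma norm_smul_sq_sub_inner_sq_le {v ω : E} (hv : ‖v‖ = 1) (hω : ‖ω‖ = 1) {s c : ℝ}
    (hωs : 1 - s ≤ ⟪v, ω⟫) (hc : |c| ≤ 1) :
    ‖c • ω‖ ^ 2 - ⟪v, c • ω⟫ ^ 2 ≤ 2 * s := by
  have hu : |⟪v, ω⟫| ≤ 1 := by simpa [hv, hω] using abs_real_inner_le_norm v ω
  rw [norm_smul, hω, real_inner_smul_right, mul_one, Real.norm_eq_abs, sq_abs]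
  have hc2 : c ^ 2 ≤ 1 := (sq_le_one_iff_abs_le_one c).2 hc
  obtain ⟨hu₁, hu₂⟩ := abs_le.1 hu
  have h1 : 1 - ⟪v, ω⟫ ^ 2 ≤ 2 * s := by nlinarith
  nlinarith [mul_nonneg (sub_nonneg.2 hc2) (by nlinarith : 0 ≤ 1 - ⟪v, ω⟫ ^ 2)]

end SphericalCap

section EuclideanCap

variable {ι : Type*} [Fintype ι]

lemma sq_apply_add_sq_apply_le_norm_sq {i j : ι} (hij : i ≠ j) (z : EuclideanSpace ℝ ι) :
    z i ^ 2 + z j ^ 2 ≤ ‖z‖ ^ 2 := by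
  classical
  rw [EuclideanSpace.real_norm_sq_eq, ← Finset.sum_pair hij (f := fun k => z k ^ 2)]
  exact Finset.sum_le_sum_of_subset_of_nonneg (Finset.subset_univ _) fun _ _ _ => sq_nonneg _

variable [DecidableEq ι]

lemma cone_sphericalCap_subset_box {v : EuclideanSpace ℝ ι} (hv : ‖v‖ = 1) {s : ℝ} {i₀ : ι}
    (T : EuclideanSpace ℝ ι ≃ₗᵢ[ℝ] EuclideanSpace ℝ ι) (hT : T v = EuclideanSpace.single i₀ 1) :
    Ioo (0 : ℝ) 1 • ((↑) '' sphericalCap v s : Set (EuclideanSpace ℝ ι)) ⊆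
      (fun y => WithLp.ofLp (T y)) ⁻¹'
        univ.pi fun i => Icc (-if i = i₀ then 1 else √(2 * s))
          (if i = i₀ then 1 else √(2 * s)) := by
  rintro _ ⟨c, ⟨hc0, hc1⟩, _, ⟨ω, hωs, rfl⟩, rfl⟩ i -
  have hω : ‖(ω : EuclideanSpace ℝ ι)‖ = 1 := by simp
  have hc : |c| ≤ 1 := by rw [abs_of_pos hc0]; exact hc1.le
  set z := T (c • (ω : EuclideanSpace ℝ ι))
  have hz₀ : z i₀ = ⟪v, c • (ω : EuclideanSpace ℝ ι)⟫ := by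
    have : ⟪EuclideanSpace.single i₀ 1, z⟫ = z i₀ := by simp [EuclideanSpace.inner_single_left]
    rw [← this, ← hT, T.inner_map_map]
  have hzn : ‖z‖ = ‖c • (ω : EuclideanSpace ℝ ι)‖ := T.norm_map _
  simp only [mem_Icc, ← abs_le]
  split_ifs with hi
  · subst hi
    rw [hz₀]
    refine (abs_real_inner_le_norm _ _).trans ?_
    rwa [hv, one_mul, norm_smul, hω, mul_one, Real.norm_eq_abs]
  · rw [← Real.sqrt_sq_eq_abs]
    refine Real.sqrt_le_sqrt ?_
    have h₁ := sq_apply_add_sq_apply_le_norm_sq hi z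
    rw [hz₀, hzn] at h₁
    linarith [norm_smul_sq_sub_inner_sq_le hv hω hωs hc]

lemma toSphere_sphericalCap_le (i₀ : ι) {v : EuclideanSpace ℝ ι} (hv : ‖v‖ = 1) (s : ℝ) :
    (volume : Measure (EuclideanSpace ℝ ι)).toSphere (sphericalCap v s) ≤
      ENNReal.ofReal (2 * Fintype.card ι * √(8 * s) ^ (Fintype.card ι - 1)) := by
  set e₀ : EuclideanSpace ℝ ι := EuclideanSpace.single i₀ 1
  set T := Submodule.reflection (ℝ ∙ (v - e₀))ᗮ
  have hT : T v = e₀ := Submodule.reflection_sub (by simp [hv, e₀])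
  set B : ι → ℝ := fun i => if i = i₀ then 1 else √(2 * s)
  have hmp : MeasurePreserving (fun y => WithLp.ofLp (T y)) volume volume :=
    (EuclideanSpace.volume_preserving_symm_measurableEquiv_toLp ι).comp T.measurePreserving
  have hbox : ∏ i, ENNReal.ofReal (B i - -B i) =
      ENNReal.ofReal 2 * ENNReal.ofReal √(8 * s) ^ (Fintype.card ι - 1) := by
    have hoff : ∀ i ∈ ({i₀}ᶜ : Finset ι),
        ENNReal.ofReal (B i - -B i) = ENNReal.ofReal √(8 * s) := by
      intro i hi
      rw [show 8 * s = 2 ^ 2 * (2 * s) by ring, Real.sqrt_mul (by positivity), Real.sqrt_sq zero_le_two]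
      simp only [B, if_neg (by simpa using hi)]
      ring_nf
    rw [Fintype.prod_eq_mul_prod_compl i₀, Finset.prod_congr rfl hoff, Finset.prod_const,
      Finset.card_compl, Finset.card_singleton]
    norm_num [B]
  rw [Measure.toSphere_apply' _ (measurableSet_sphericalCap v s), finrank_euclideanSpace]
  calc _ ≤ Fintype.card ι * volume ((fun y => WithLp.ofLp (T y)) ⁻¹'
          univ.pi fun i => Icc (-B i) (B i)) :=
        mul_le_mul_right (measure_mono (cone_sphericalCap_subset_box hv T hT)) _
    _ = Fintype.card ι * (ENNReal.ofReal 2 * ENNReal.ofReal √(8 * s) ^ (Fintype.card ι - 1)) := by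
        rw [hmp.measure_preimage (MeasurableSet.univ_pi fun _ => measurableSet_Icc).nullMeasurableSet,
          volume_pi_pi, ← hbox]
        simp only [Real.volume_Icc]
    _ = _ := by
        rw [← ENNReal.ofReal_pow (by positivity), ← ENNReal.ofReal_mul zero_le_two,
          ← ENNReal.ofReal_natCast, ← ENNReal.ofReal_mul (Nat.cast_nonneg _)]
        ring_nf

end EuclideanCap

lemma lintegral_ofReal_exp_le_tsum {α : Type*} [MeasurableSpace α] (μ : Measure α) {u : α → ℝ}
    (hu : Measurable u) {c : ℝ} (huc : ∀ a, u a ≤ c) :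
    ∫⁻ a, ENNReal.ofReal (exp (u a)) ∂μ ≤
      ∑' k : ℕ, ENNReal.ofReal (exp (c - k)) * μ {a | c - (k + 1) < u a} := by
  have hmeas (k : ℕ) : MeasurableSet {a | c - (k + 1) < u a} := measurableSet_lt measurable_const hu
  calc ∫⁻ a, ENNReal.ofReal (exp (u a)) ∂μ
      ≤ ∫⁻ a, ∑' k : ℕ, {a | c - (k + 1) < u a}.indicator (fun _ => ENNReal.ofReal (exp (c - k))) a ∂μ :=
        lintegral_mono fun a => by
          have hk := Nat.floor_le (sub_nonneg.2 (huc a))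
          have hk' := Nat.lt_floor_add_one (c - u a)
          refine le_trans ?_ (ENNReal.le_tsum ⌊c - u a⌋₊)
          rw [indicator_of_mem]
          · exact ENNReal.ofReal_le_ofReal (exp_le_exp.2 (by linarith))
          · exact show c - (⌊c - u a⌋₊ + 1) < u a by linarith
    _ = ∑' k : ℕ, ENNReal.ofReal (exp (c - k)) * μ {a | c - (k + 1) < u a} := by
        rw [lintegral_tsum fun k => (measurable_const.indicator (hmeas k)).aemeasurable]
        simp_rw [lintegral_indicator_const (hmeas _)]

lemma summable_exp_neg_mul_add_one_rpow (γ : ℝ) :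
    Summable fun k : ℕ => exp (-k) * ((k : ℝ) + 1) ^ γ := by
  set N := ⌈γ⌉₊
  have hN : Summable fun k : ℕ => exp 1 * (((k : ℝ) + 1) ^ N * exp (-1 * ((k : ℝ) + 1))) := by
    have := (summable_nat_add_iff 1).2 (summable_pow_mul_exp_neg_nat_mul N one_pos)
    push_cast at this
    exact this.mul_left _
  refine hN.of_nonneg_of_le (fun k => by positivity) fun k => ?_
  have hpow : ((k : ℝ) + 1) ^ γ ≤ ((k : ℝ) + 1) ^ N := by
    rw [← rpow_natCast]
    exact rpow_le_rpow_of_exponent_le (by linarith [k.cast_nonneg (α := ℝ)]) (Nat.le_ceil γ)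
  calc exp (-k) * ((k : ℝ) + 1) ^ γ ≤ exp (-k) * ((k : ℝ) + 1) ^ N := by gcongr
    _ = exp 1 * (((k : ℝ) + 1) ^ N * exp (-1 * ((k : ℝ) + 1))) := by
        rw [mul_left_comm, ← exp_add]; ring_nf

lemma setOf_lt_inner_subset_sphericalCap {E : Type*} [NormedAddCommGroup E] [InnerProductSpace ℝ E]
    {lam : ℝ} (hlam : 0 < lam) {x : E} (hx : x ≠ 0) (t : ℝ) :
    {ω : sphere (0 : E) 1 | lam * ‖x‖ - t < lam * ⟪x, (ω : E)⟫} ⊆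
      sphericalCap (‖x‖⁻¹ • x) (t / (lam * ‖x‖)) := by
  intro ω hω
  have hc : 0 < lam * ‖x‖ := mul_pos hlam (norm_pos_iff.2 hx)
  simp only [sphericalCap, mem_ofPred_eq, real_inner_smul_left] at hω ⊢
  rw [one_sub_div hc.ne', div_le_iff₀ hc]
  have : ‖x‖⁻¹ * ⟪x, (ω : E)⟫ * (lam * ‖x‖) = lam * ⟪x, (ω : E)⟫ := by
    field_simp [norm_ne_zero_iff.2 hx]
  linarith

section YordanovZhang

variable {n : ℕ}

noncomputable def yordanovZhang (lam : ℝ) (x : EuclideanSpace ℝ (Fin n)) : ℝ :=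
  ∫ ω : sphere (0 : EuclideanSpace ℝ (Fin n)) 1, exp (lam * ⟪x, (ω : EuclideanSpace ℝ (Fin n))⟫)
    ∂(volume : Measure (EuclideanSpace ℝ (Fin n))).toSphere

lemma yordanovZhang_nonneg (lam : ℝ) (x : EuclideanSpace ℝ (Fin n)) : 0 ≤ yordanovZhang lam x :=
  integral_nonneg fun _ => (exp_pos _).le

lemma yordanovZhang_le_exp_mul_measure {lam : ℝ} (hlam : 0 ≤ lam) (x : EuclideanSpace ℝ (Fin n)) :
    yordanovZhang lam x ≤
      exp (lam * ‖x‖) * (volume : Measure (EuclideanSpace ℝ (Fin n))).toSphere.real univ := by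
  refine (Real.le_norm_self _).trans (norm_integral_le_of_norm_le_const (.of_forall fun ω => ?_))
  rw [Real.norm_eq_abs, abs_of_pos (exp_pos _), exp_le_exp]
  refine mul_le_mul_of_nonneg_left ((real_inner_le_norm _ _).trans ?_) hlam
  simp

lemma yordanovZhang_le_of_ne_zero (hn : 1 ≤ n) {lam : ℝ} (hlam : 0 < lam)
    {x : EuclideanSpace ℝ (Fin n)} (hx : x ≠ 0) :
    yordanovZhang lam x ≤
      2 * n * 8 ^ (((n : ℝ) - 1) / 2) * (∑' k : ℕ, exp (-k) * ((k : ℝ) + 1) ^ (((n : ℝ) - 1) / 2)) *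
        (lam * ‖x‖) ^ (-(((n : ℝ) - 1) / 2)) * exp (lam * ‖x‖) := by
  set γ := ((n : ℝ) - 1) / 2
  set σ := (volume : Measure (EuclideanSpace ℝ (Fin n))).toSphere
  set c := lam * ‖x‖
  set A := 2 * n * 8 ^ γ * c ^ (-γ)
  have hc : 0 < c := mul_pos hlam (norm_pos_iff.2 hx)
  have hv : ‖‖x‖⁻¹ • x‖ = 1 := by
    rw [norm_smul, norm_inv, norm_norm, inv_mul_cancel₀ (norm_ne_zero_iff.2 hx)]
  have hcap (k : ℕ) : σ {ω | c - (k + 1) < lam * ⟪x, (ω : EuclideanSpace ℝ (Fin n))⟫} ≤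
      ENNReal.ofReal (A * ((k : ℝ) + 1) ^ γ) := by
    refine (measure_mono (setOf_lt_inner_subset_sphericalCap hlam hx _)).trans
      ((toSphere_sphericalCap_le ⟨0, hn⟩ hv _).trans_eq ?_)
    rw [Fintype.card_fin, ← rpow_natCast, Nat.cast_sub hn, Nat.cast_one,
      ← rpow_div_two_eq_sqrt _ (by positivity), mul_rpow (by norm_num) (by positivity),
      div_rpow (by positivity) hc.le]
    simp only [A, γ, rpow_neg hc.le]
    ring_nf
  have hinner (ω : sphere (0 : EuclideanSpace ℝ (Fin n)) 1) :
      lam * ⟪x, (ω : EuclideanSpace ℝ (Fin n))⟫ ≤ c :=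
    mul_le_mul_of_nonneg_left ((real_inner_le_norm _ _).trans (by simp)) hlam.le
  have hS := summable_exp_neg_mul_add_one_rpow γ
  have hlintegral : ∫⁻ ω, ENNReal.ofReal (exp (lam * ⟪x, (ω : EuclideanSpace ℝ (Fin n))⟫)) ∂σ ≤
      ENNReal.ofReal (A * exp c * ∑' k : ℕ, exp (-k) * ((k : ℝ) + 1) ^ γ) :=
    calc _ ≤ ∑' k : ℕ, ENNReal.ofReal (exp (c - k)) *
          σ {ω | c - (k + 1) < lam * ⟪x, (ω : EuclideanSpace ℝ (Fin n))⟫} :=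
          lintegral_ofReal_exp_le_tsum σ
            (continuous_const.mul (continuous_const.inner continuous_subtype_val)).measurable hinner
      _ ≤ ∑' k : ℕ, ENNReal.ofReal (exp (c - k)) * ENNReal.ofReal (A * ((k : ℝ) + 1) ^ γ) :=
          ENNReal.tsum_le_tsum fun k => mul_le_mul_right (hcap k) _
      _ = ∑' k : ℕ, ENNReal.ofReal (A * exp c * (exp (-k) * ((k : ℝ) + 1) ^ γ)) := by
          congr 1 with k
          rw [← ENNReal.ofReal_mul (exp_pos _).le, sub_eq_add_neg, exp_add]
          ring_nf
      _ = _ := by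
          rw [← ENNReal.ofReal_tsum_of_nonneg (fun k => by positivity) (hS.mul_left _), tsum_mul_left]
  rw [yordanovZhang, integral_eq_lintegral_of_nonneg_ae (.of_forall fun _ => (exp_pos _).le)
    (by fun_prop)]
  refine (ENNReal.toReal_le_of_le_ofReal (by positivity) hlintegral).trans_eq ?_
  ring

lemma exists_yordanovZhang_le (hn : 1 ≤ n) {lam : ℝ} (hlam : 0 < lam) :
    ∃ K, 0 < K ∧ ∀ x : EuclideanSpace ℝ (Fin n),
      yordanovZhang lam x ≤ K * (1 + ‖x‖) ^ (-(((n : ℝ) - 1) / 2)) * exp (lam * ‖x‖) := by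
  set γ := ((n : ℝ) - 1) / 2
  have hγ : 0 ≤ γ := div_nonneg (sub_nonneg.2 (by exact_mod_cast hn)) zero_le_two
  set M := (volume : Measure (EuclideanSpace ℝ (Fin n))).toSphere.real univ
  have hM : 0 ≤ M := measureReal_nonneg
  set S := ∑' k : ℕ, exp (-k) * ((k : ℝ) + 1) ^ γ
  have hS : 0 < S := (summable_exp_neg_mul_add_one_rpow γ).tsum_pos (fun _ => by positivity) 0
    (by simp)
  set A := 2 * n * 8 ^ γ * S * lam ^ (-γ)
  have hA : 0 < A := by positivity
  refine ⟨2 ^ γ * (M + A), by positivity, fun x => ?_⟩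
  have h2 : 2 ^ γ * (1 + ‖x‖) ^ (-γ) = (2 / (1 + ‖x‖)) ^ γ := by
    rw [div_rpow zero_le_two (by positivity), rpow_neg (by positivity), div_eq_mul_inv]
  rcases lt_or_ge ‖x‖ 1 with hx | hx
  · have h1 : 1 ≤ 2 ^ γ * (1 + ‖x‖) ^ (-γ) := h2 ▸ one_le_rpow
      ((one_le_div (by positivity)).2 (by linarith)) hγ
    calc yordanovZhang lam x ≤ exp (lam * ‖x‖) * M := yordanovZhang_le_exp_mul_measure hlam.le x
      _ ≤ exp (lam * ‖x‖) * ((M + A) * (2 ^ γ * (1 + ‖x‖) ^ (-γ))) := by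
          gcongr
          nlinarith
      _ = _ := by ring
  · have hx0 : x ≠ 0 := norm_pos_iff.1 (by linarith)
    have h1 : ‖x‖ ^ (-γ) ≤ 2 ^ γ * (1 + ‖x‖) ^ (-γ) := by
      rw [h2, rpow_neg (norm_nonneg x), ← inv_rpow (norm_nonneg x)]
      gcongr
      rw [inv_eq_one_div, div_le_div_iff₀ (by linarith) (by positivity)]
      linarith
    calc yordanovZhang lam x ≤ 2 * n * 8 ^ γ * S * (lam * ‖x‖) ^ (-γ) * exp (lam * ‖x‖) :=
          yordanovZhang_le_of_ne_zero hn hlam hx0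
      _ = A * ‖x‖ ^ (-γ) * exp (lam * ‖x‖) := by
          rw [mul_rpow hlam.le (norm_nonneg x)]; ring
      _ ≤ (M + A) * (2 ^ γ * (1 + ‖x‖) ^ (-γ)) * exp (lam * ‖x‖) := by
          gcongr
          linarith
      _ = _ := by ring

lemma exists_yordanovZhang_rpow_le (hn : 1 ≤ n) {lam : ℝ} (hlam : 0 < lam) {q : ℝ}
    (hq : 0 ≤ q) :
    ∃ K, 0 < K ∧ ∀ x : EuclideanSpace ℝ (Fin n),
      yordanovZhang lam x ^ q ≤
        K * ((1 + ‖x‖) ^ (-(((n : ℝ) - 1) / 2 * q)) * exp (q * lam * ‖x‖)) := by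
  obtain ⟨K, hK, hφ⟩ := exists_yordanovZhang_le hn hlam
  refine ⟨K ^ q, by positivity, fun x => ?_⟩
  calc yordanovZhang lam x ^ q
      ≤ (K * (1 + ‖x‖) ^ (-(((n : ℝ) - 1) / 2)) * exp (lam * ‖x‖)) ^ q := by
        gcongr
        · exact yordanovZhang_nonneg lam x
        · exact hφ x
    _ = _ := by
        rw [mul_rpow (by positivity) (by positivity), mul_rpow hK.le (by positivity),
          ← rpow_mul (by positivity), ← exp_mul]
        ring_nf

end YordanovZhang

lemma integrableOn_one_add_rpow_mul_exp_neg (β : ℝ) {μ : ℝ} (hμ : 0 < μ) :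
    IntegrableOn (fun t : ℝ => (1 + t) ^ β * exp (-μ * t)) (Ioi 0) := by
  have hμ2 : 0 < μ / 2 := half_pos hμ
  have hO := ((isLittleO_rpow_exp_pos_mul_atTop β hμ2).isBigO.comp_tendsto
    (Filter.tendsto_atTop_add_const_left _ 1 Filter.tendsto_id)).mul
      (Asymptotics.isBigO_refl (fun t : ℝ => exp (-μ * t)) Filter.atTop)
  refine integrable_of_isBigO_exp_neg hμ2 (fun t ht => ?_) (hO.trans ?_)
  · have : (0 : ℝ) < 1 + t := by linarith [mem_Ici.1 ht]
    exact ((continuousAt_const.add continuousAt_id).rpow_const (.inl this.ne')).mul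
      (by fun_prop) |>.continuousWithinAt
  · refine .of_bound (exp (μ / 2)) (.of_forall fun t => le_of_eq ?_)
    simp only [Function.comp_apply, id, Real.norm_eq_abs, abs_of_pos (exp_pos _), ← exp_add]
    ring_nf

lemma one_add_rpow_neg_le {β y ρ : ℝ} (hβ : 0 ≤ β) (hy : 0 ≤ y) (hyρ : y ≤ ρ) :
    (1 + y) ^ (-β) ≤ (1 + ρ) ^ (-β) * (1 + (ρ - y)) ^ β := by
  have hpeetre : (1 + ρ) ^ β ≤ (1 + y) ^ β * (1 + (ρ - y)) ^ β := by
    rw [← mul_rpow (by linarith) (by linarith)]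
    exact rpow_le_rpow (by linarith) (by nlinarith [mul_nonneg hy (sub_nonneg.2 hyρ)]) hβ
  calc (1 + y) ^ (-β) = (1 + ρ) ^ (-β) * ((1 + ρ) ^ β * (1 + y) ^ (-β)) := by
        rw [← mul_assoc, ← rpow_add (by linarith), neg_add_cancel, rpow_zero, one_mul]
    _ ≤ (1 + ρ) ^ (-β) * ((1 + y) ^ β * (1 + (ρ - y)) ^ β * (1 + y) ^ (-β)) :=
        mul_le_mul_of_nonneg_left (by gcongr) (rpow_nonneg (by linarith) _)
    _ = (1 + ρ) ^ (-β) * (1 + (ρ - y)) ^ β := by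
        rw [mul_right_comm, ← rpow_add (by linarith), add_neg_cancel, rpow_zero, one_mul]

lemma exists_integral_pow_mul_one_add_rpow_neg_mul_exp_le (m : ℕ) {β μ : ℝ} (hβ : 0 ≤ β)
    (hμ : 0 < μ) :
    ∃ I, 0 < I ∧ ∀ ρ, 0 ≤ ρ →
      ∫ y in Ioo 0 ρ, y ^ m * ((1 + y) ^ (-β) * exp (μ * y)) ≤
        I * (ρ ^ m * (1 + ρ) ^ (-β) * exp (μ * ρ)) := by
  set g : ℝ → ℝ := fun t => (1 + t) ^ β * exp (-μ * t)
  have hg := integrableOn_one_add_rpow_mul_exp_neg β hμ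
  have hg0 : ∀ t ∈ Ioi (0 : ℝ), 0 < g t := fun t (ht : 0 < t) => by positivity
  have hI : 0 < ∫ t in Ioi 0, g t := by
    rw [setIntegral_pos_iff_support_of_nonneg_ae
      ((ae_restrict_mem measurableSet_Ioi).mono fun t ht => (hg0 t ht).le) hg,
      inter_eq_right.2 fun t ht => Function.mem_support.2 (hg0 t ht).ne']
    simp
  refine ⟨∫ t in Ioi 0, g t, hI, fun ρ hρ => ?_⟩
  set B := ρ ^ m * (1 + ρ) ^ (-β) * exp (μ * ρ)
  have hB : 0 ≤ B := mul_nonneg (mul_nonneg (pow_nonneg hρ _) (rpow_nonneg (by linarith) _))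
    (exp_pos _).le
  have hpt : ∀ y ∈ Ioo 0 ρ, y ^ m * ((1 + y) ^ (-β) * exp (μ * y)) ≤ B * g (ρ - y) := by
    rintro y ⟨hy0, hyρ⟩
    calc y ^ m * ((1 + y) ^ (-β) * exp (μ * y))
        ≤ ρ ^ m * ((1 + ρ) ^ (-β) * (1 + (ρ - y)) ^ β * (exp (μ * ρ) * exp (-μ * (ρ - y)))) := by
          rw [← exp_add, show μ * ρ + -μ * (ρ - y) = μ * y by ring]
          gcongr
          exact one_add_rpow_neg_le hβ hy0.le hyρ.le
      _ = B * g (ρ - y) := by ring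
  have hcont : ContinuousOn (fun y => B * g (ρ - y)) (Icc 0 ρ) := by
    refine continuousOn_const.mul (ContinuousOn.mul ?_ (by fun_prop))
    exact (continuousOn_const.add (continuousOn_const.sub continuousOn_id)).rpow_const
      fun y hy => .inl (by linarith [hy.2] : (0 : ℝ) < 1 + (ρ - y)).ne'
  have hreflect : ∫ y in Ioo 0 ρ, g (ρ - y) = ∫ t in Ioo 0 ρ, g t := by
    rw [← integral_Ioc_eq_integral_Ioo, ← integral_Ioc_eq_integral_Ioo,
      ← intervalIntegral.integral_of_le hρ, ← intervalIntegral.integral_of_le hρ,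
      intervalIntegral.integral_comp_sub_left, sub_self, sub_zero]
  calc ∫ y in Ioo 0 ρ, y ^ m * ((1 + y) ^ (-β) * exp (μ * y))
      ≤ ∫ y in Ioo 0 ρ, B * g (ρ - y) :=
        integral_mono_of_nonneg ((ae_restrict_mem measurableSet_Ioo).mono fun y hy => by
            have := hy.1; positivity)
          ((hcont.integrableOn_Icc).mono_set Ioo_subset_Icc_self)
          ((ae_restrict_mem measurableSet_Ioo).mono hpt)
    _ = B * ∫ t in Ioo 0 ρ, g t := by rw [integral_const_mul, hreflect]
    _ ≤ B * ∫ t in Ioi 0, g t :=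
        mul_le_mul_of_nonneg_left (setIntegral_mono_set hg
          ((ae_restrict_mem measurableSet_Ioi).mono fun t ht => (hg0 t ht).le)
          Ioo_subset_Ioi_self.eventuallyLE) hB
    _ = _ := mul_comm _ _

lemma setIntegral_ball_fun_norm_addHaar {E F : Type*} [NormedAddCommGroup E] [NormedSpace ℝ E]
    [Nontrivial E] [FiniteDimensional ℝ E] [MeasurableSpace E] [BorelSpace E] (μ : Measure E)
    [μ.IsAddHaarMeasure] [NormedAddCommGroup F] [NormedSpace ℝ F] (f : ℝ → F) (r : ℝ) :
    ∫ x in ball (0 : E) r, f ‖x‖ ∂μ = Module.finrank ℝ E • μ.real (ball 0 1) •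
      ∫ y in Ioo 0 r, y ^ (Module.finrank ℝ E - 1) • f y := by
  have hball : (ball (0 : E) r).indicator (fun x => f ‖x‖) = fun x => (Iio r).indicator f ‖x‖ := by
    ext x; by_cases hx : ‖x‖ < r <;> simp [indicator, hx]
  have hIio : (fun y : ℝ => y ^ (Module.finrank ℝ E - 1) • (Iio r).indicator f y) =
      (Iio r).indicator fun y => y ^ (Module.finrank ℝ E - 1) • f y := by
    ext y; by_cases hy : y < r <;> simp [hy]
  rw [← integral_indicator measurableSet_ball, hball, integral_fun_norm_addHaar μ, hIio,
    setIntegral_indicator measurableSet_Iio, Ioi_inter_Iio]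

lemma setIntegral_ball_le_of_le_fun_norm {E : Type*} [NormedAddCommGroup E] [NormedSpace ℝ E]
    [Nontrivial E] [FiniteDimensional ℝ E] [MeasurableSpace E] [BorelSpace E] (μ : Measure E)
    [μ.IsAddHaarMeasure] {f : E → ℝ} {h : ℝ → ℝ} (hf : ∀ x, 0 ≤ f x) (hfh : ∀ x, f x ≤ h ‖x‖)
    (hh : ContinuousOn h (Ici 0)) (r : ℝ) :
    ∫ x in ball (0 : E) r, f x ∂μ ≤ Module.finrank ℝ E * μ.real (ball 0 1) *
      ∫ y in Ioo 0 r, y ^ (Module.finrank ℝ E - 1) * h y := by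
  have hcont : Continuous fun x : E => h ‖x‖ :=
    hh.comp_continuous continuous_norm fun x => norm_nonneg x
  calc ∫ x in ball (0 : E) r, f x ∂μ ≤ ∫ x in ball (0 : E) r, h ‖x‖ ∂μ :=
        integral_mono_of_nonneg (.of_forall hf)
          ((hcont.continuousOn.integrableOn_compact (isCompact_closedBall 0 r)).mono_set
            ball_subset_closedBall)
          (.of_forall hfh)
    _ = _ := by
        rw [setIntegral_ball_fun_norm_addHaar, nsmul_eq_mul, smul_eq_mul, mul_assoc]
        rfl

theorem stmt_10 (n : ℕ) (hn : 1 ≤ n) (lam p : ℝ) (hlam : 0 < lam) (hp : 1 < p)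
    (p' : ℝ) (hp' : p' = p / (p - 1)) :
    ∃ C : ℝ, 0 < C ∧
      ∀ ρ : ℝ, 1 ≤ ρ →
        (∫ x in Metric.ball (0 : EuclideanSpace ℝ (Fin n)) ρ,
            (∫ ω : Metric.sphere (0 : EuclideanSpace ℝ (Fin n)) 1,
                Real.exp (lam * inner ℝ x (ω : EuclideanSpace ℝ (Fin n)))
              ∂((volume : Measure (EuclideanSpace ℝ (Fin n))).toSphere)) ^ p')
        ≤ C * ρ ^ ((n : ℝ) - 1 - ((n : ℝ) - 1) * p' / 2) * Real.exp (p' * lam * ρ) := by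
  have hp'pos : 0 < p' := hp' ▸ div_pos (by linarith) (by linarith)
  set β := ((n : ℝ) - 1) / 2 * p'
  have hβ : 0 ≤ β := mul_nonneg (div_nonneg (sub_nonneg.2 (by exact_mod_cast hn)) zero_le_two)
    hp'pos.le
  obtain ⟨K, hK, hφ⟩ := exists_yordanovZhang_rpow_le hn hlam hp'pos.le
  obtain ⟨I, hI, hradial⟩ :=
    exists_integral_pow_mul_one_add_rpow_neg_mul_exp_le (n - 1) hβ (mul_pos hp'pos hlam)
  set V := (volume : Measure (EuclideanSpace ℝ (Fin n))).real (ball 0 1)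
  have hV : 0 < V := ENNReal.toReal_pos (measure_ball_pos _ _ one_pos).ne' measure_ball_lt_top.ne
  have : NeZero n := ⟨by omega⟩
  refine ⟨n * V * K * I, by positivity, fun ρ hρ => ?_⟩
  have hρ0 : 0 < ρ := by linarith
  have hmajorant : ContinuousOn (fun r => K * ((1 + r) ^ (-β) * exp (p' * lam * r))) (Ici 0) :=
    continuousOn_const.mul (((continuousOn_const.add continuousOn_id).rpow_const
      fun r (hr : 0 ≤ r) => .inl (by positivity : (0 : ℝ) < 1 + r).ne').mul (by fun_prop))
  calc ∫ x in ball (0 : EuclideanSpace ℝ (Fin n)) ρ, yordanovZhang lam x ^ p'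
      ≤ n * V * ∫ y in Ioo 0 ρ, y ^ (n - 1) * (K * ((1 + y) ^ (-β) * exp (p' * lam * y))) := by
        simpa only [finrank_euclideanSpace_fin] using setIntegral_ball_le_of_le_fun_norm volume
          (fun x => rpow_nonneg (yordanovZhang_nonneg lam x) p') hφ hmajorant ρ
    _ = n * V * K * ∫ y in Ioo 0 ρ, y ^ (n - 1) * ((1 + y) ^ (-β) * exp (p' * lam * y)) := by
        simp_rw [mul_left_comm _ K, integral_const_mul]
        ring
    _ ≤ n * V * K * (I * (ρ ^ (n - 1) * (1 + ρ) ^ (-β) * exp (p' * lam * ρ))) := by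
        gcongr
        exact hradial ρ hρ0.le
    _ ≤ n * V * K * (I * (ρ ^ (n - 1) * ρ ^ (-β) * exp (p' * lam * ρ))) := by
        have : (1 + ρ) ^ (-β) ≤ ρ ^ (-β) := rpow_le_rpow_of_nonpos hρ0 (by linarith) (neg_nonpos.2 hβ)
        gcongr
    _ = n * V * K * I * ρ ^ ((n : ℝ) - 1 - ((n : ℝ) - 1) * p' / 2) * exp (p' * lam * ρ) := by
        rw [← rpow_natCast, Nat.cast_sub hn, Nat.cast_one,
          show (n : ℝ) - 1 - ((n : ℝ) - 1) * p' / 2 = ((n : ℝ) - 1) + -β by ring, rpow_add hρ0]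
        ring
end

section
/- Let -1 < ℓ < 0, λ > 0, and for 0 ≤ t ≤ s define the kernel K(t,s) = exp(-2λ[A(s) - A(t)]) ((1+t)/(1+s))^ℓ, where A(t) = ((1+t)^{ℓ+1}-1)/(ℓ+1). Then for all t ≥ 0: ∫_t^∞ K(t,s)(1+s)^{-2} ds ≤ (1/(2λ)) (1+t)^{-ℓ-2}, and ∫_t^∞ K(t,s)(1+s)^{-2ℓ-4} ds ≤ (1/(2λ)) (1+t)^{-3ℓ-4}. -/
/-! Writing `K(t,s) (1+s)^q = e^{-2λ(A s - A t)} (1+s)^ℓ · (1+t)^ℓ (1+s)^{q-2ℓ}` and using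
`(1+s)^{q-2ℓ} ≤ (1+t)^{q-2ℓ}` (valid since `q ≤ 2ℓ` for both exponents `q` once `ℓ > -1`),
the integral is at most `(1+t)^{q-ℓ}` times `∫_t^∞ e^{-2λ(A s - A t)} A'(s) ds`, which equals
`1/(2λ)` exactly because `A' = (1+s)^ℓ` and `A → ∞`. -/

open MeasureTheory Set Filter Topology Real

section ExpWeight

variable {A a : ℝ → ℝ} {s t c : ℝ}

lemma hasDerivAt_neg_exp_div (hc : c ≠ 0) (hA : HasDerivAt A (a s) s) :
    HasDerivAt (fun x => -(exp (-c * (A x - A t)) / c)) (exp (-c * (A s - A t)) * a s) s := by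
  refine (((hA.sub_const (A t)).const_mul (-c)).exp.div_const c).neg.congr_deriv ?_
  field_simp

lemma tendsto_neg_exp_div_atTop (hc : 0 < c) (hA_top : Tendsto A atTop atTop) :
    Tendsto (fun x => -(exp (-c * (A x - A t)) / c)) atTop (𝓝 0) := by
  have hexp : Tendsto (fun x => exp (-c * (A x - A t))) atTop (𝓝 0) := tendsto_exp_atBot.comp <|
    (tendsto_atTop_add_const_right _ (-A t) hA_top).const_mul_atTop_of_neg (neg_lt_zero.2 hc)
  simpa using (hexp.div_const c).neg

lemma integrableOn_Ioi_exp_mul_deriv (hc : 0 < c) (hA : ∀ s ∈ Ici t, HasDerivAt A (a s) s)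
    (ha : ∀ s ∈ Ioi t, 0 ≤ a s) (hA_top : Tendsto A atTop atTop) :
    IntegrableOn (fun s => exp (-c * (A s - A t)) * a s) (Ioi t) :=
  integrableOn_Ioi_deriv_of_nonneg' (fun s hs => hasDerivAt_neg_exp_div hc.ne' (hA s hs))
    (fun s hs => mul_nonneg (exp_pos _).le (ha s hs))
    (tendsto_neg_exp_div_atTop hc hA_top)

lemma integral_Ioi_exp_mul_deriv (hc : 0 < c) (hA : ∀ s ∈ Ici t, HasDerivAt A (a s) s)
    (ha : ∀ s ∈ Ioi t, 0 ≤ a s) (hA_top : Tendsto A atTop atTop) :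
    ∫ s in Ioi t, exp (-c * (A s - A t)) * a s = 1 / c := by
  rw [integral_Ioi_of_hasDerivAt_of_nonneg' (fun s hs => hasDerivAt_neg_exp_div hc.ne' (hA s hs))
    (fun s hs => mul_nonneg (exp_pos _).le (ha s hs))
    (tendsto_neg_exp_div_atTop hc hA_top)]
  simp

end ExpWeight

lemma div_rpow_mul_rpow_le {x y ℓ q : ℝ} (hx : 0 < x) (hxy : x ≤ y) (hq : q ≤ 2 * ℓ) :
    (x / y) ^ ℓ * y ^ q ≤ x ^ (q - ℓ) * y ^ ℓ := by
  have hy : 0 < y := hx.trans_le hxy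
  have hy_split : y ^ q = y ^ (q - 2 * ℓ) * y ^ ℓ * y ^ ℓ := by
    rw [← rpow_add hy, ← rpow_add hy]; ring_nf
  calc (x / y) ^ ℓ * y ^ q = x ^ ℓ * y ^ (q - 2 * ℓ) * y ^ ℓ := by
        rw [div_rpow hx.le hy.le, hy_split]; field_simp
    _ ≤ x ^ ℓ * x ^ (q - 2 * ℓ) * y ^ ℓ := by
        gcongr x ^ ℓ * ?_ * _
        exact rpow_le_rpow_of_nonpos hx hxy (by linarith)
    _ = x ^ (q - ℓ) * y ^ ℓ := by rw [← rpow_add hx]; ring_nf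

section Primitive

variable {ℓ : ℝ}

lemma hasDerivAt_one_add_rpow_sub_one_div {s : ℝ} (hℓ : ℓ + 1 ≠ 0) (hs : -1 < s) :
    HasDerivAt (fun x => ((1 + x) ^ (ℓ + 1) - 1) / (ℓ + 1)) ((1 + s) ^ ℓ) s := by
  have hbase : HasDerivAt (fun x : ℝ => 1 + x) 1 s := (hasDerivAt_id s).const_add 1
  refine ((hbase.rpow_const (Or.inl (by linarith))).sub_const 1).div_const _ |>.congr_deriv ?_
  rw [add_sub_cancel_right]
  field_simp

lemma tendsto_one_add_rpow_sub_one_div_atTop (hℓ : 0 < ℓ + 1) :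
    Tendsto (fun x : ℝ => ((1 + x) ^ (ℓ + 1) - 1) / (ℓ + 1)) atTop atTop :=
  (tendsto_atTop_add_const_right _ (-1) <|
    (tendsto_rpow_atTop hℓ).comp (tendsto_atTop_add_const_left _ 1 tendsto_id)).atTop_div_const hℓ

end Primitive

theorem setIntegral_kernel_mul_rpow_le {A : ℝ → ℝ} {ℓ lam q t : ℝ} (hℓ : -1 < ℓ) (hlam : 0 < lam)
    (hA : ∀ t : ℝ, A t = ((1 + t) ^ (ℓ + 1) - 1) / (ℓ + 1)) (ht : -1 < t) (hq : q ≤ 2 * ℓ) :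
    ∫ s in Ioi t, exp (-2 * lam * (A s - A t)) * ((1 + t) / (1 + s)) ^ ℓ * (1 + s) ^ q ≤
      1 / (2 * lam) * (1 + t) ^ (q - ℓ) := by
  have hA_fun : A = fun x => ((1 + x) ^ (ℓ + 1) - 1) / (ℓ + 1) := funext hA
  have hc : 0 < 2 * lam := by positivity
  have hderiv : ∀ s ∈ Ici t, HasDerivAt A ((1 + s) ^ ℓ) s := fun s hs => hA_fun ▸
    hasDerivAt_one_add_rpow_sub_one_div (by linarith) (by linarith [mem_Ici.1 hs])
  have htop : Tendsto A atTop atTop := hA_fun ▸ tendsto_one_add_rpow_sub_one_div_atTop (by linarith)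
  have hpos : ∀ s ∈ Ioi t, 0 < 1 + s := fun s hs => by linarith [mem_Ioi.1 hs]
  have hweight_nonneg : ∀ s ∈ Ioi t, 0 ≤ (1 + s) ^ ℓ := fun s hs => rpow_nonneg (hpos s hs).le ℓ
  have hintegrand_nonneg : ∀ s ∈ Ioi t,
      0 ≤ exp (-2 * lam * (A s - A t)) * ((1 + t) / (1 + s)) ^ ℓ * (1 + s) ^ q := fun s hs =>
    mul_nonneg (mul_nonneg (exp_pos _).le (rpow_nonneg (div_pos (by linarith) (hpos s hs)).le _))
      (rpow_nonneg (hpos s hs).le q)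
  have hbound : ∀ s ∈ Ioi t,
      exp (-2 * lam * (A s - A t)) * ((1 + t) / (1 + s)) ^ ℓ * (1 + s) ^ q ≤
        (1 + t) ^ (q - ℓ) * (exp (-(2 * lam) * (A s - A t)) * (1 + s) ^ ℓ) := fun s hs => by
    calc _ = exp (-2 * lam * (A s - A t)) * (((1 + t) / (1 + s)) ^ ℓ * (1 + s) ^ q) := mul_assoc ..
      _ ≤ exp (-2 * lam * (A s - A t)) * ((1 + t) ^ (q - ℓ) * (1 + s) ^ ℓ) :=
        mul_le_mul_of_nonneg_left
          (div_rpow_mul_rpow_le (by linarith) (by linarith [mem_Ioi.1 hs]) hq) (exp_pos _).le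
      _ = _ := by ring_nf
  calc _ ≤ ∫ s in Ioi t, (1 + t) ^ (q - ℓ) * (exp (-(2 * lam) * (A s - A t)) * (1 + s) ^ ℓ) :=
        setIntegral_mono_of_nonneg hintegrand_nonneg hbound
          ((integrableOn_Ioi_exp_mul_deriv hc hderiv hweight_nonneg htop).const_mul _)
    _ = 1 / (2 * lam) * (1 + t) ^ (q - ℓ) := by
        rw [integral_const_mul, integral_Ioi_exp_mul_deriv hc hderiv hweight_nonneg htop, mul_comm]

theorem stmt_16_general (ℓ : ℝ) (hℓ1 : -1 < ℓ) (lam : ℝ) (hlam : 0 < lam)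
    (A : ℝ → ℝ) (hA : ∀ t : ℝ, A t = ((1 + t) ^ (ℓ + 1) - 1) / (ℓ + 1))
    (K : ℝ → ℝ → ℝ)
    (hK : ∀ t s : ℝ, K t s = Real.exp (-2 * lam * (A s - A t)) * ((1 + t) / (1 + s)) ^ ℓ) :
    ∀ t : ℝ, 0 ≤ t →
      (∫ s in Set.Ioi t, K t s * (1 + s) ^ (-2 : ℝ)) ≤ 1 / (2 * lam) * (1 + t) ^ (-ℓ - 2) ∧
      (∫ s in Set.Ioi t, K t s * (1 + s) ^ (-2 * ℓ - 4)) ≤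
        1 / (2 * lam) * (1 + t) ^ (-3 * ℓ - 4) := by
  intro t ht
  have bound := fun q (hq : q ≤ 2 * ℓ) =>
    setIntegral_kernel_mul_rpow_le (q := q) hℓ1 hlam hA (by linarith : -1 < t) hq
  simp only [hK]
  constructor
  · simpa only [show (-2 : ℝ) - ℓ = -ℓ - 2 by ring] using bound (-2) (by linarith)
  · simpa only [show -2 * ℓ - 4 - ℓ = -3 * ℓ - 4 by ring] using bound (-2 * ℓ - 4) (by linarith)

theorem stmt_16 (ℓ : ℝ) (hℓ1 : -1 < ℓ) (hℓ2 : ℓ < 0) (lam : ℝ) (hlam : 0 < lam)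
    (A : ℝ → ℝ) (hA : ∀ t : ℝ, A t = ((1 + t) ^ (ℓ + 1) - 1) / (ℓ + 1))
    (K : ℝ → ℝ → ℝ)
    (hK : ∀ t s : ℝ, K t s = Real.exp (-2 * lam * (A s - A t)) * ((1 + t) / (1 + s)) ^ ℓ) :
    ∀ t : ℝ, 0 ≤ t →
      (∫ s in Set.Ioi t, K t s * (1 + s) ^ (-2 : ℝ)) ≤ 1 / (2 * lam) * (1 + t) ^ (-ℓ - 2) ∧
      (∫ s in Set.Ioi t, K t s * (1 + s) ^ (-2 * ℓ - 4)) ≤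
        1 / (2 * lam) * (1 + t) ^ (-3 * ℓ - 4) :=
  stmt_16_general ℓ hℓ1 lam hlam A hA K hK
end
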